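/- Upper bound for the two-particle energy on the unit square: there exists a constant C, independent of R, m and α ∈ [0,2], such that E^R_2(m) ≤ C for all R > 0 and all m ≥ 0, where E^R_2(m) is the two-particle fermionic Neumann energy on the unit square Q₀ = [0,1]² with m exterior particles. -/

import Mathlib

open MeasureTheory

noncomputable section

abbrev E2 : Type := EuclideanSpace ℝ (Fin 2)

/-- The 90° rotation `(x¹,x²)^⊥ := (−x²,x¹)`. -/
def perp (x : E2) : E2 := (WithLp.equiv 2 (Fin 2 → ℝ)).symm ![-(x 1), x 0]

/-- Regularized norm `|x|_R := max(|x|, R)`. -/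
def regNorm (R : ℝ) (x : E2) : ℝ := max ‖x‖ R

def basisVec (c : Fin 2) : E2 := EuclideanSpace.single c 1

/-- The direction in `N`-particle configuration space corresponding to moving
particle `j` in coordinate direction `c`. -/
def dirv (N : ℕ) (j : Fin N) (c : Fin 2) : Fin N → E2 :=
  Function.update (0 : Fin N → E2) j (basisVec c)

/-- Antisymmetry of an `N`-particle wave function. -/
def Antisym (N : ℕ) (Ψ : (Fin N → E2) → ℂ) : Prop :=
  ∀ σ : Equiv.Perm (Fin N), ∀ X : Fin N → E2,
    Ψ (X ∘ σ) = ((Equiv.Perm.sign σ : ℤ) : ℂ) * Ψ X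

/-- One-particle density `ρ_Ψ`. -/
def density (N : ℕ) (Ψ : (Fin N → E2) → ℂ) (x : E2) : ℝ :=
  ∑ j : Fin N, ∫ Y : {k : Fin N // k ≠ j} → E2,
    ‖Ψ (fun k => if h : k = j then x else Y ⟨k, h⟩)‖ ^ 2

/-- Component `c` of `∇_{x_j} |Ψ|` at configuration `X`. -/
def gradAbs {N : ℕ} (Ψ : (Fin N → E2) → ℂ) (j : Fin N) (X : Fin N → E2) (c : Fin 2) : ℝ :=
  fderiv ℝ (fun Z => ‖Ψ Z‖) X (dirv N j c)

/-- The axis-parallel closed square with lower-left corner `a` and side length `L`. -/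
def square (a : E2) (L : ℝ) : Set E2 := {x | ∀ i : Fin 2, x i ∈ Set.Icc (a i) (a i + L)}

/-- Vector potential `A^R_j(X_n, Y_m)` felt by particle `j` inside the box, created by the
other particles inside the box and the `m` fixed particles outside. -/
def AvecQ (R : ℝ) {n m : ℕ} (X : Fin n → E2) (Y : Fin m → E2) (j : Fin n) : E2 :=
  (∑ k ∈ Finset.univ.erase j, ((regNorm R (X j - X k)) ^ 2)⁻¹ • perp (X j - X k))
    + ∑ k : Fin m, ((regNorm R (X j - Y k)) ^ 2)⁻¹ • perp (X j - Y k)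

/-- The scalar potential `V_R(X_n, Y_m)`. -/
def Vpot (R : ℝ) {n m : ℕ} (X : Fin n → E2) (Y : Fin m → E2) : ℝ :=
  (2 / R ^ 2) *
      (∑ j : Fin n, ∑ k ∈ Finset.univ.erase j, Set.indicator (Metric.ball (X k) R) 1 (X j))
    + (2 / R ^ 2) *
      (∑ j : Fin n, ∑ k : Fin m, Set.indicator (Metric.ball (Y k) R) 1 (X j))

/-- Component `c` of `(−i∇_{x_j} + α A^R_j(X_n,Y_m)) Ψ` at configuration `X`. -/
def covDQ (R α : ℝ) {n m : ℕ} (Ψ : (Fin n → E2) → ℂ) (Y : Fin m → E2) (j : Fin n)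
    (X : Fin n → E2) (c : Fin 2) : ℂ :=
  -Complex.I * fderiv ℝ Ψ X (dirv n j c) + ((α * AvecQ R X Y j c : ℝ) : ℂ) * Ψ X

/-- The energy functional `E^R_n(Q, Y_m)[Ψ]`. -/
def energyFunc (R α : ℝ) (n m : ℕ) (Q : Set E2) (Y : Fin m → E2)
    (Ψ : (Fin n → E2) → ℂ) : ℝ :=
  (1 / 2) * ∑ j : Fin n,
      (∫ X in Set.univ.pi fun _ : Fin n => Q, ∑ c : Fin 2, ‖covDQ R α Ψ Y j X c‖ ^ 2)
    + (1 / 4) * ∑ j : Fin n,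
      (∫ X in Set.univ.pi fun _ : Fin n => Q, ∑ c : Fin 2, gradAbs Ψ j X c ^ 2)
    + (1 / 4) * ∫ X in Set.univ.pi fun _ : Fin n => Q, Vpot R X Y * ‖Ψ X‖ ^ 2

/-- The fermionic Neumann ground-state energy `E^R_n(Q, m)`: infimum of the energy functional
over the positions `Y_m` of the `m` exterior particles and over `L²(Qⁿ)`-normalized
antisymmetric wave functions `Ψ_n`. -/
def neumannE (R α : ℝ) (n m : ℕ) (Q : Set E2) : ℝ :=
  sInf { e : ℝ | ∃ (Y : Fin m → E2) (Ψ : (Fin n → E2) → ℂ),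
    (∀ k, Y k ∉ Q) ∧ Antisym n Ψ ∧
    (∫ X in Set.univ.pi fun _ : Fin n => Q, ‖Ψ X‖ ^ 2) = 1 ∧
    e = energyFunc R α n m Q Y Ψ }

open Set

/-!
The trial state `Ψ(x₁, x₂) = √6 (x₁¹ - x₂¹)` is antisymmetric, normalised on `Q₀²` and linear,
so its gradient is bounded. All `m` exterior particles sit at one point at distance `m + R + 1`
from `Q₀`: they never meet the support of `V_R`, and their vector potential is at most
`m / (m + 1) ≤ 1`. The interior vector potential has size `|x₁ - x₂| / |x₁ - x₂|_R²`, but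
`|Ψ| ≤ √6 |x₁ - x₂|` vanishes on the diagonal, which makes `|A^R_j| |Ψ|` bounded; likewise
`V_R = 4/R²` exactly where `|x₁ - x₂| < R`, so `V_R |Ψ|² ≤ 24`. Every integrand of the energy is
thus bounded uniformly in `R`, `m` and `α ∈ [0, 2]` on a box of volume one.
-/

lemma norm_perp (x : E2) : ‖perp x‖ = ‖x‖ := by
  simp [EuclideanSpace.norm_eq, perp, Fin.sum_univ_two, add_comm]

lemma norm_le_regNorm (R : ℝ) (x : E2) : ‖x‖ ≤ regNorm R x := le_max_left _ _

lemma norm_inv_regNorm_sq_smul_perp (R : ℝ) (z : E2) :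
    ‖(regNorm R z ^ 2)⁻¹ • perp z‖ = ‖z‖ / regNorm R z ^ 2 := by
  rw [norm_smul, norm_perp, norm_inv, norm_pow, Real.norm_eq_abs, abs_of_nonneg
    ((norm_nonneg z).trans (norm_le_regNorm R z)), inv_mul_eq_div]

lemma norm_div_regNorm_sq_le_inv_norm (R : ℝ) (z : E2) : ‖z‖ / regNorm R z ^ 2 ≤ ‖z‖⁻¹ := by
  rcases (norm_nonneg z).eq_or_lt with hz | hz
  · simp [← hz]
  calc ‖z‖ / regNorm R z ^ 2 ≤ ‖z‖ / ‖z‖ ^ 2 := by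
        gcongr; exact norm_le_regNorm R z
    _ = ‖z‖⁻¹ := by field_simp

lemma norm_sq_div_regNorm_sq_le_one (R : ℝ) (z : E2) : ‖z‖ ^ 2 / regNorm R z ^ 2 ≤ 1 :=
  div_le_one_of_le₀ (by gcongr; exact norm_le_regNorm R z) (sq_nonneg _)

lemma norm_dirv (N : ℕ) (j : Fin N) (c : Fin 2) : ‖dirv N j c‖ = 1 := by
  rw [dirv, ← Pi.single, Pi.norm_single, basisVec, PiLp.norm_single, norm_one]

lemma Vpot_nonneg (R : ℝ) {n m : ℕ} (X : Fin n → E2) (Y : Fin m → E2) : 0 ≤ Vpot R X Y := by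
  have hind : ∀ (s : Set E2) x, 0 ≤ s.indicator (1 : E2 → ℝ) x :=
    fun _ _ => indicator_nonneg (fun _ _ => zero_le_one) _
  unfold Vpot
  refine add_nonneg (mul_nonneg ?_ ?_) (mul_nonneg ?_ ?_) <;>
    first
    | positivity
    | exact Finset.sum_nonneg fun _ _ => Finset.sum_nonneg fun _ _ => hind _ _

lemma energyFunc_nonneg (R α : ℝ) (n m : ℕ) (Q : Set E2) (Y : Fin m → E2)
    (Ψ : (Fin n → E2) → ℂ) : 0 ≤ energyFunc R α n m Q Y Ψ := by
  unfold energyFunc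
  refine add_nonneg (add_nonneg ?_ ?_) ?_ <;>
    refine mul_nonneg (by norm_num) ?_
  · exact Finset.sum_nonneg fun _ _ => integral_nonneg fun _ => by positivity
  · exact Finset.sum_nonneg fun _ _ => integral_nonneg fun _ => by positivity
  · exact integral_nonneg fun X => mul_nonneg (Vpot_nonneg R X Y) (by positivity)

lemma neumannE_le_energyFunc {R α : ℝ} {n m : ℕ} {Q : Set E2} {Y : Fin m → E2}
    {Ψ : (Fin n → E2) → ℂ} (hY : ∀ k, Y k ∉ Q) (hΨ : Antisym n Ψ)
    (hnorm : ∫ X in univ.pi fun _ : Fin n => Q, ‖Ψ X‖ ^ 2 = 1) :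
    neumannE R α n m Q ≤ energyFunc R α n m Q Y Ψ := by
  refine csInf_le ⟨0, ?_⟩ ⟨Y, Ψ, hY, hΨ, hnorm, rfl⟩
  rintro _ ⟨Y', Ψ', -, -, -, rfl⟩
  exact energyFunc_nonneg R α n m Q Y' Ψ'

lemma setIntegral_le_of_nonneg_of_le {X : Type*} [MeasurableSpace X] {μ : Measure X}
    {s : Set X} {f : X → ℝ} {C : ℝ} (hs : μ s < ⊤) (h0 : ∀ x ∈ s, 0 ≤ f x)
    (hC : ∀ x ∈ s, f x ≤ C) : ∫ x in s, f x ∂μ ≤ C * μ.real s :=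
  (le_abs_self _).trans <| norm_setIntegral_le_of_norm_le_const hs fun x hx => by
    rw [Real.norm_eq_abs, abs_of_nonneg (h0 x hx)]; exact hC x hx

lemma energyFunc_le_of_forall_le {R α : ℝ} {n m : ℕ} {Q : Set E2} (hQ : volume Q = 1)
    {Y : Fin m → E2} {Ψ : (Fin n → E2) → ℂ} {a b v : ℝ}
    (ha : ∀ X ∈ univ.pi (fun _ : Fin n => Q), ∀ j c, ‖covDQ R α Ψ Y j X c‖ ≤ a)
    (hb : ∀ X ∈ univ.pi (fun _ : Fin n => Q), ∀ j c, |gradAbs Ψ j X c| ≤ b)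
    (hv : ∀ X ∈ univ.pi (fun _ : Fin n => Q), Vpot R X Y * ‖Ψ X‖ ^ 2 ≤ v) :
    energyFunc R α n m Q Y Ψ ≤ n * (a ^ 2 + b ^ 2 / 2) + v / 4 := by
  have hbox : volume (univ.pi fun _ : Fin n => Q) = 1 := by simp [volume_pi_pi, hQ]
  have hfin : volume (univ.pi fun _ : Fin n => Q) < ⊤ := hbox ▸ ENNReal.one_lt_top
  have hreal : volume.real (univ.pi fun _ : Fin n => Q) = 1 := by simp [measureReal_def, hbox]
  have hcov : ∀ j, ∫ X in univ.pi (fun _ : Fin n => Q),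
      ∑ c : Fin 2, ‖covDQ R α Ψ Y j X c‖ ^ 2 ≤ 2 * a ^ 2 := fun j =>
    (setIntegral_le_of_nonneg_of_le (C := 2 * a ^ 2) hfin (fun _ _ => by positivity) fun X hX => by
      rw [Fin.sum_univ_two]
      nlinarith [ha X hX j 0, ha X hX j 1, norm_nonneg (covDQ R α Ψ Y j X 0),
        norm_nonneg (covDQ R α Ψ Y j X 1)]).trans_eq (by rw [hreal, mul_one])
  have hgrad : ∀ j, ∫ X in univ.pi (fun _ : Fin n => Q),
      ∑ c : Fin 2, gradAbs Ψ j X c ^ 2 ≤ 2 * b ^ 2 := fun j =>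
    (setIntegral_le_of_nonneg_of_le (C := 2 * b ^ 2) hfin (fun _ _ => by positivity) fun X hX => by
      rw [Fin.sum_univ_two, ← sq_abs (gradAbs Ψ j X 0), ← sq_abs (gradAbs Ψ j X 1)]
      nlinarith [hb X hX j 0, hb X hX j 1, abs_nonneg (gradAbs Ψ j X 0),
        abs_nonneg (gradAbs Ψ j X 1)]).trans_eq (by rw [hreal, mul_one])
  have hV := setIntegral_le_of_nonneg_of_le hfin
    (fun X _ => mul_nonneg (Vpot_nonneg R X Y) (sq_nonneg ‖Ψ X‖)) hv
  have hcovSum := Finset.sum_le_sum fun j (_ : j ∈ Finset.univ) => hcov j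
  have hgradSum := Finset.sum_le_sum fun j (_ : j ∈ Finset.univ) => hgrad j
  simp only [Finset.sum_const, Finset.card_univ, Fintype.card_fin, nsmul_eq_mul] at hcovSum hgradSum
  rw [hreal, mul_one] at hV
  unfold energyFunc
  linarith

lemma square_eq_preimage_Icc (a : E2) (L : ℝ) :
    square a L = WithLp.ofLp ⁻¹' Icc (WithLp.ofLp a) (WithLp.ofLp a + fun _ => L) := by
  ext x
  simp [square, Pi.le_def, forall_and]

lemma volume_square (a : E2) (L : ℝ) : volume (square a L) = ENNReal.ofReal L ^ 2 := by
  rw [square_eq_preimage_Icc, (PiLp.volume_preserving_ofLp (Fin 2)).measure_preimage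
    measurableSet_Icc.nullMeasurableSet, Real.volume_Icc_pi]
  simp

lemma isCompact_square (a : E2) (L : ℝ) : IsCompact (square a L) := by
  rw [square_eq_preimage_Icc]
  exact (PiLp.homeomorph 2 fun _ : Fin 2 => ℝ).isCompact_preimage.mpr isCompact_Icc

lemma setIntegral_univ_pi_prod {ι E : Type*} [Fintype ι] [MeasureSpace E]
    [SigmaFinite (volume : Measure E)] (s : Set E) (f : ι → E → ℝ) :
    ∫ X in univ.pi (fun _ => s), ∏ i, f i (X i) = ∏ i, ∫ x in s, f i x := by
  rw [volume_pi, Measure.restrict_pi_pi, integral_fintype_prod_eq_prod]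

lemma setIntegral_square_coord_pow (k : ℕ) : ∫ x in square 0 1, x 0 ^ k = 1 / (k + 1) := by
  have hsq : square 0 1 = WithLp.ofLp ⁻¹' univ.pi (fun _ : Fin 2 => Icc (0 : ℝ) 1) := by
    rw [square_eq_preimage_Icc, ← pi_univ_Icc]; simp
  have hInt : ∫ t in Icc (0 : ℝ) 1, t ^ k = 1 / (k + 1) := by
    rw [integral_Icc_eq_integral_Ioc, ← intervalIntegral.integral_of_le zero_le_one, integral_pow]
    simp
  calc ∫ x in square 0 1, x 0 ^ k
      = ∫ x in square 0 1, ∏ i : Fin 2, ![fun t : ℝ => t ^ k, fun _ => 1] i (WithLp.ofLp x i) := by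
        simp [Fin.prod_univ_two]
    _ = ∫ y in univ.pi (fun _ : Fin 2 => Icc (0 : ℝ) 1),
          ∏ i : Fin 2, ![fun t : ℝ => t ^ k, fun _ => 1] i (y i) := by
        rw [hsq]
        exact (PiLp.volume_preserving_ofLp (Fin 2)).setIntegral_preimage_emb
          (MeasurableEquiv.toLp 2 (Fin 2 → ℝ)).symm.measurableEmbedding
          (fun y : Fin 2 → ℝ => ∏ i : Fin 2, ![fun t : ℝ => t ^ k, fun _ => 1] i (y i)) _
    _ = 1 / (k + 1) := by
        rw [setIntegral_univ_pi_prod, Fin.prod_univ_two]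
        simp [hInt]

lemma norm_covDQ_le (R α : ℝ) {n m : ℕ} (Ψ : (Fin n → E2) →L[ℝ] ℂ) (Y : Fin m → E2)
    (j : Fin n) (X : Fin n → E2) (c : Fin 2) :
    ‖covDQ R α Ψ Y j X c‖ ≤ ‖Ψ‖ + |α| * (|AvecQ R X Y j c| * ‖Ψ X‖) := by
  rw [covDQ, ContinuousLinearMap.fderiv]
  refine (norm_add_le _ _).trans (add_le_add ?_ ?_)
  · rw [norm_mul, norm_neg, Complex.norm_I, one_mul]
    simpa [norm_dirv] using Ψ.le_opNorm (dirv n j c)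
  · rw [norm_mul, Complex.norm_real, Real.norm_eq_abs, abs_mul, mul_assoc]

lemma abs_gradAbs_le_opNorm {n : ℕ} (Ψ : (Fin n → E2) →L[ℝ] ℂ) (j : Fin n) (X : Fin n → E2)
    (c : Fin 2) : |gradAbs Ψ j X c| ≤ ‖Ψ‖ := by
  have hlip : LipschitzWith ‖Ψ‖₊ fun Z => ‖Ψ Z‖ := by
    have h := lipschitzWith_one_norm.comp Ψ.lipschitz
    rw [one_mul] at h
    exact h
  rw [gradAbs, ← Real.norm_eq_abs]
  calc ‖fderiv ℝ (fun Z => ‖Ψ Z‖) X (dirv n j c)‖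
      ≤ ‖fderiv ℝ (fun Z => ‖Ψ Z‖) X‖ * ‖dirv n j c‖ := ContinuousLinearMap.le_opNorm _ _
    _ ≤ ‖Ψ‖ := by
        rw [norm_dirv, mul_one]
        exact norm_fderiv_le_of_lipschitz ℝ hlip

def relCoord : (Fin 2 → E2) →L[ℝ] ℝ :=
  (EuclideanSpace.proj 0).comp
    (ContinuousLinearMap.proj (R := ℝ) (φ := fun _ : Fin 2 => E2) 0 - ContinuousLinearMap.proj 1)

lemma relCoord_apply (X : Fin 2 → E2) : relCoord X = X 0 0 - X 1 0 := rfl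

lemma abs_relCoord_le_norm_sub (X : Fin 2 → E2) : |relCoord X| ≤ ‖X 0 - X 1‖ := by
  simpa [relCoord_apply] using PiLp.norm_apply_le (X 0 - X 1) 0

lemma norm_relCoord_le : ‖relCoord‖ ≤ 2 :=
  relCoord.opNorm_le_bound zero_le_two fun X => by
    rw [Real.norm_eq_abs, two_mul]
    exact (abs_relCoord_le_norm_sub X).trans
      ((norm_sub_le _ _).trans (add_le_add (norm_le_pi_norm X 0) (norm_le_pi_norm X 1)))

/-- The normalisation `√6` comes from `∫∫_{[0,1]²} (s - t)² ds dt = 1/6`. -/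
def trialState : (Fin 2 → E2) →L[ℝ] ℂ := Complex.ofRealCLM.comp (√6 • relCoord)

lemma trialState_apply (X : Fin 2 → E2) : trialState X = ((√6 * (X 0 0 - X 1 0) : ℝ) : ℂ) := rfl

lemma norm_trialState_apply (X : Fin 2 → E2) : ‖trialState X‖ = √6 * |relCoord X| := by
  rw [trialState_apply, Complex.norm_real, Real.norm_eq_abs, abs_mul, abs_of_nonneg (by positivity),
    relCoord_apply]

lemma sqrt_six_le_three : √6 ≤ 3 := Real.sqrt_le_iff.mpr ⟨by norm_num, by norm_num⟩

lemma opNorm_trialState_le : ‖trialState‖ ≤ 6 :=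
  calc ‖trialState‖ ≤ ‖Complex.ofRealCLM‖ * (‖√6‖ * ‖relCoord‖) :=
        (Complex.ofRealCLM.opNorm_comp_le _).trans
          (by gcongr; exact ContinuousLinearMap.opNorm_smul_le _ _)
    _ ≤ 1 * (3 * 2) := by
        rw [Complex.ofRealCLM_norm, Real.norm_of_nonneg (by positivity)]
        gcongr
        exacts [sqrt_six_le_three, norm_relCoord_le]
    _ = 6 := by norm_num

lemma antisym_trialState : Antisym 2 trialState := by
  have hperm : ∀ σ : Equiv.Perm (Fin 2), σ = 1 ∨ σ = Equiv.swap 0 1 := by decide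
  intro σ X
  rcases hperm σ with rfl | rfl
  · simp
  · simp only [trialState_apply, Function.comp_apply, Equiv.swap_apply_left,
      Equiv.swap_apply_right, Equiv.Perm.sign_swap (by decide : (0 : Fin 2) ≠ 1)]
    push_cast
    ring

lemma norm_trialState_apply_le_of_mem {X : Fin 2 → E2}
    (hX : X ∈ univ.pi fun _ => square 0 1) : ‖trialState X‖ ≤ 3 := by
  have h0 := (hX 0 (mem_univ _)) 0
  have h1 := (hX 1 (mem_univ _)) 0
  simp only [PiLp.zero_apply, zero_add, mem_Icc] at h0 h1
  rw [norm_trialState_apply, relCoord_apply]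
  calc √6 * |X 0 0 - X 1 0| ≤ 3 * 1 := by
        gcongr
        exacts [sqrt_six_le_three, abs_sub_le_iff.mpr ⟨by linarith, by linarith⟩]
    _ = 3 := mul_one 3

lemma setIntegral_unitSquare_pair_pow_mul_pow (k l : ℕ) :
    ∫ X in univ.pi (fun _ : Fin 2 => square 0 1), X 0 0 ^ k * X 1 0 ^ l
      = 1 / (k + 1) * (1 / (l + 1)) := by
  have := setIntegral_univ_pi_prod (square 0 1) ![fun x : E2 => x 0 ^ k, fun x => x 0 ^ l]
  simp only [Fin.prod_univ_two, Matrix.cons_val_zero, Matrix.cons_val_one] at this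
  rw [this, setIntegral_square_coord_pow, setIntegral_square_coord_pow]

lemma setIntegral_norm_trialState_sq :
    ∫ X in univ.pi (fun _ : Fin 2 => square 0 1), ‖trialState X‖ ^ 2 = 1 := by
  have hint : ∀ k l : ℕ, IntegrableOn (fun X : Fin 2 → E2 => X 0 0 ^ k * X 1 0 ^ l)
      (univ.pi fun _ : Fin 2 => square 0 1) :=
    fun k l => (by fun_prop : Continuous _).continuousOn.integrableOn_compact
      (isCompact_univ_pi fun _ => isCompact_square 0 1)
  calc ∫ X in univ.pi (fun _ : Fin 2 => square 0 1), ‖trialState X‖ ^ 2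
      = ∫ X in univ.pi (fun _ : Fin 2 => square 0 1), (6 * (X 0 0 ^ 2 * X 1 0 ^ 0)
          - 12 * (X 0 0 ^ 1 * X 1 0 ^ 1) + 6 * (X 0 0 ^ 0 * X 1 0 ^ 2)) := by
        congr 1 with X
        rw [norm_trialState_apply, mul_pow, sq_abs, Real.sq_sqrt (by norm_num), relCoord_apply]
        ring
    _ = 6 * (1 / 3 * 1) - 12 * (1 / 2 * (1 / 2)) + 6 * (1 * (1 / 3)) := by
        rw [integral_add ?sub ((hint 0 2).const_mul 6),
          integral_sub ((hint 2 0).const_mul 6) ((hint 1 1).const_mul 12),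
          integral_const_mul, integral_const_mul, integral_const_mul,
          setIntegral_unitSquare_pair_pow_mul_pow, setIntegral_unitSquare_pair_pow_mul_pow,
          setIntegral_unitSquare_pair_pow_mul_pow]
        · norm_num
        · exact ((hint 2 0).const_mul 6).sub ((hint 1 1).const_mul 12)
    _ = 1 := by norm_num

lemma Fin.univ_erase_eq_one_sub (j : Fin 2) : Finset.univ.erase j = {1 - j} := by
  fin_cases j <;> decide

lemma norm_AvecQ_two_le (R : ℝ) {m : ℕ} (X : Fin 2 → E2) (Y : Fin m → E2) (j : Fin 2) :
    ‖AvecQ R X Y j‖ ≤ ‖X 0 - X 1‖ / regNorm R (X 0 - X 1) ^ 2 + ∑ k, ‖X j - Y k‖⁻¹ := by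
  have hsym : ‖X j - X (1 - j)‖ = ‖X 0 - X 1‖ := by
    fin_cases j
    · rfl
    · exact norm_sub_rev _ _
  rw [AvecQ, Fin.univ_erase_eq_one_sub, Finset.sum_singleton]
  refine (norm_add_le _ _).trans (add_le_add ?_ ((norm_sum_le _ _).trans
    (Finset.sum_le_sum fun k _ => ?_)))
  · rw [norm_inv_regNorm_sq_smul_perp, regNorm, hsym, ← regNorm]
  · rw [norm_inv_regNorm_sq_smul_perp]
    exact norm_div_regNorm_sq_le_inv_norm R _

lemma norm_sub_div_regNorm_sq_mul_norm_trialState_le (R : ℝ) (X : Fin 2 → E2) :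
    ‖X 0 - X 1‖ / regNorm R (X 0 - X 1) ^ 2 * ‖trialState X‖ ≤ 3 :=
  calc ‖X 0 - X 1‖ / regNorm R (X 0 - X 1) ^ 2 * ‖trialState X‖
      ≤ ‖X 0 - X 1‖ / regNorm R (X 0 - X 1) ^ 2 * (√6 * ‖X 0 - X 1‖) := by
        rw [norm_trialState_apply]
        gcongr
        exact abs_relCoord_le_norm_sub X
    _ = √6 * (‖X 0 - X 1‖ ^ 2 / regNorm R (X 0 - X 1) ^ 2) := by ring
    _ ≤ 3 * 1 := by
        gcongr
        exacts [sqrt_six_le_three, norm_sq_div_regNorm_sq_le_one R _]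
    _ = 3 := mul_one 3

lemma Fin.sum_inv_le_one_of_forall_le {m : ℕ} {d : Fin m → ℝ} (hd : ∀ k, (m : ℝ) + 1 ≤ d k) :
    ∑ k, (d k)⁻¹ ≤ 1 :=
  calc ∑ k, (d k)⁻¹ ≤ ∑ _k : Fin m, ((m : ℝ) + 1)⁻¹ :=
        Finset.sum_le_sum fun k _ => inv_anti₀ (by positivity) (hd k)
    _ ≤ 1 := by
        rw [Finset.sum_const, Finset.card_univ, Fintype.card_fin, nsmul_eq_mul,
          mul_inv_le_iff₀ (by positivity)]
        linarith

lemma abs_AvecQ_mul_norm_trialState_le (R : ℝ) {m : ℕ} {X : Fin 2 → E2} {Y : Fin m → E2}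
    (hX : X ∈ univ.pi fun _ => square 0 1) (hY : ∀ j k, (m : ℝ) + 1 ≤ ‖X j - Y k‖) (j c : Fin 2) :
    |AvecQ R X Y j c| * ‖trialState X‖ ≤ 6 :=
  calc |AvecQ R X Y j c| * ‖trialState X‖
      ≤ (‖X 0 - X 1‖ / regNorm R (X 0 - X 1) ^ 2 + ∑ k, ‖X j - Y k‖⁻¹) * ‖trialState X‖ := by
        gcongr
        exact (PiLp.norm_apply_le _ c).trans (norm_AvecQ_two_le R X Y j)
    _ ≤ 3 + 1 * 3 := by
        rw [add_mul]
        gcongr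
        exacts [norm_sub_div_regNorm_sq_mul_norm_trialState_le R X,
          Fin.sum_inv_le_one_of_forall_le (hY j), norm_trialState_apply_le_of_mem hX]
    _ = 6 := by norm_num

lemma norm_covDQ_trialState_le {R α : ℝ} (hα : α ∈ Icc (0 : ℝ) 2) {m : ℕ} {X : Fin 2 → E2}
    {Y : Fin m → E2} (hX : X ∈ univ.pi fun _ => square 0 1)
    (hY : ∀ j k, (m : ℝ) + 1 ≤ ‖X j - Y k‖) (j c : Fin 2) :
    ‖covDQ R α trialState Y j X c‖ ≤ 18 :=
  calc ‖covDQ R α trialState Y j X c‖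
      ≤ ‖trialState‖ + |α| * (|AvecQ R X Y j c| * ‖trialState X‖) := norm_covDQ_le R α _ Y j X c
    _ ≤ 6 + 2 * 6 := by
        gcongr
        exacts [opNorm_trialState_le, abs_le.mpr ⟨by linarith [hα.1], hα.2⟩,
          abs_AvecQ_mul_norm_trialState_le R hX hY j c]
    _ = 18 := by norm_num

lemma Vpot_two_mul_norm_trialState_sq_le {R : ℝ} {m : ℕ} {X : Fin 2 → E2}
    {Y : Fin m → E2} (hY : ∀ j k, R ≤ dist (X j) (Y k)) :
    Vpot R X Y * ‖trialState X‖ ^ 2 ≤ 24 := by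
  have hext : ∀ j k, (Metric.ball (Y k) R).indicator (1 : E2 → ℝ) (X j) = 0 := fun j k =>
    indicator_of_notMem (fun h => (Metric.mem_ball.mp h).not_ge (hY j k)) _
  have hV : Vpot R X Y = 2 / R ^ 2 * ((Metric.ball (X 1) R).indicator 1 (X 0)
      + (Metric.ball (X 0) R).indicator 1 (X 1)) := by
    simp [Vpot, Fin.sum_univ_two, hext, Fin.univ_erase_eq_one_sub]
  rw [hV]
  by_cases h : X 0 ∈ Metric.ball (X 1) R
  · have hrel : relCoord X ^ 2 ≤ R ^ 2 := by
      rw [← sq_abs]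
      gcongr
      exact (abs_relCoord_le_norm_sub X).trans (Metric.mem_ball.mp h).le
    rw [indicator_of_mem h, indicator_of_mem (Metric.mem_ball_comm.mp h), norm_trialState_apply,
      mul_pow, sq_abs, Real.sq_sqrt (by norm_num)]
    calc 2 / R ^ 2 * ((1 : E2 → ℝ) (X 0) + (1 : E2 → ℝ) (X 1)) * (6 * relCoord X ^ 2)
        = 24 * (relCoord X ^ 2 / R ^ 2) := by simp only [Pi.one_apply]; ring
      _ ≤ 24 * 1 := by gcongr; exact div_le_one_of_le₀ hrel (sq_nonneg R)
      _ = 24 := mul_one 24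
  · rw [indicator_of_notMem h, indicator_of_notMem (mt Metric.mem_ball_comm.mp h)]
    norm_num

lemma single_neg_notMem_unitSquare {d : ℝ} (hd : 0 < d) :
    EuclideanSpace.single 0 (-d) ∉ square 0 1 := fun h => by
  have : 0 ≤ -d := by simpa using (h 0).1
  linarith

lemma le_norm_sub_single_neg (d : ℝ) {x : E2} (hx : x ∈ square 0 1) :
    d ≤ ‖x - EuclideanSpace.single 0 (-d)‖ := by
  have h0 : 0 ≤ x 0 := by simpa using (hx 0).1
  refine le_trans ?_ (PiLp.norm_apply_le _ 0)
  rw [PiLp.sub_apply, PiLp.single_apply, if_pos rfl, Real.norm_eq_abs]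
  exact le_abs.mpr (Or.inl (by linarith))

/-- **Upper bound for the two-particle energy on the unit square.** -/
theorem two_particle_energy_upper_bound :
    ∃ C : ℝ,
      ∀ (R : ℝ), 0 < R → ∀ (m : ℕ),
        ∀ α ∈ Set.Icc (0 : ℝ) 2,
          neumannE R α 2 m (square 0 1) ≤ C := by
  refine ⟨690, fun R hR m α hα => ?_⟩
  set y : E2 := EuclideanSpace.single 0 (-((m : ℝ) + R + 1))
  have hfar : ∀ X ∈ univ.pi (fun _ : Fin 2 => square 0 1), ∀ j, (m : ℝ) + R + 1 ≤ ‖X j - y‖ :=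
    fun X hX j => le_norm_sub_single_neg _ (hX j (mem_univ j))
  have hm : (0 : ℝ) ≤ m := m.cast_nonneg
  calc neumannE R α 2 m (square 0 1)
      ≤ energyFunc R α 2 m (square 0 1) (fun _ => y) trialState :=
        neumannE_le_energyFunc (fun _ => single_neg_notMem_unitSquare (by positivity))
          antisym_trialState setIntegral_norm_trialState_sq
    _ ≤ 2 * (18 ^ 2 + 6 ^ 2 / 2) + 24 / 4 :=
        energyFunc_le_of_forall_le (by simp [volume_square])
          (fun X hX => norm_covDQ_trialState_le hα hX fun j _ => by linarith [hfar X hX j])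
          (fun X _ j c => (abs_gradAbs_le_opNorm _ j X c).trans opNorm_trialState_le)
          (fun X hX => Vpot_two_mul_norm_trialState_sq_le fun j _ => by
            rw [dist_eq_norm]; linarith [hfar X hX j])
    _ = 690 := by norm_num
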